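/- Fix $0<p<1/2$ and $n$. The Courtade–Kumar conjecture for balanced functions ($I(f(Y);X)\leq 1-h(p)$ for all balanced $f:\{0,1\}^n\to\{0,1\}$) holds if and only if the symmetrized Li–Médard conjecture holds ($N^{\mathsf{sym}}_\alpha(f)\leq N^{\mathsf{sym}}_\alpha(f_0)$ for all balanced $f$ and all $\alpha\in[1,2]$). -/

import Mathlib

open Finset Real Filter

/-- The noise operator `T_p` applied to a Boolean function on the Hamming cube. -/
noncomputable def Tp (n : ℕ) (p : ℝ) (f : (Fin n → Bool) → Bool) (x : Fin n → Bool) : ℝ :=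
  ∑ y : Fin n → Bool,
    p ^ hammingDist x y * (1 - p) ^ (n - hammingDist x y) * (if f y then 1 else 0)

/-- A Boolean function is balanced if it takes the value 1 exactly half the time. -/
def IsBalanced (n : ℕ) (f : (Fin n → Bool) → Bool) : Prop :=
  ∑ y : Fin n → Bool, (if f y then (1 : ℝ) else 0) = 2 ^ n / 2

/-- Dictatorship function on coordinate `i`. -/
def dict (n : ℕ) (i : Fin n) : (Fin n → Bool) → Bool := fun y => y i

/-- `N_α(f) = ∑_x (T_p f x)^α` (real power). -/
noncomputable def Nal (n : ℕ) (p : ℝ) (f : (Fin n → Bool) → Bool) (α : ℝ) : ℝ :=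
  ∑ x : Fin n → Bool, Tp n p f x ^ α

/-- Symmetrized version `N^sym_α(f) = ∑_x (T_p f x)^α + (1 - T_p f x)^α`. -/
noncomputable def Nsym (n : ℕ) (p : ℝ) (f : (Fin n → Bool) → Bool) (α : ℝ) : ℝ :=
  ∑ x : Fin n → Bool, (Tp n p f x ^ α + (1 - Tp n p f x) ^ α)

/-- Binary entropy function, in bits. -/
noncomputable def binEnt (t : ℝ) : ℝ := -(t * Real.logb 2 t) - (1 - t) * Real.logb 2 (1 - t)

/-- Mutual information `I(f(Y); X)` for a balanced Boolean function `f`,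
with `X` uniform on the cube and `Y` the output of a BSC(p) on input `X`. -/
noncomputable def MI (n : ℕ) (p : ℝ) (f : (Fin n → Bool) → Bool) : ℝ :=
  1 - ((2 : ℝ) ^ n)⁻¹ * ∑ x : Fin n → Bool, binEnt (Tp n p f x)

open Topology

/-!
For `1 ≤ α ≤ 2` the function `φ(t) = t ^ α + (1 - t) ^ α` is, on `[0, 1/2]`, a concave function of
the binary entropy `h(t)`: the ratio `φ'/h'` is antitone, which after the substitution
`(1 - t) / t = exp (2θ)` comes down to `aθ cosh ((1 - a)θ) ≤ sinh (aθ) cosh θ` for `a = α - 1`.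
The tangent at `h(p)` gives `φ(t) ≤ φ(p) + c (h(t) - h(p))` with `c ≤ 0` for all `t ∈ [0, 1]`
(by the symmetry `t ↦ 1 - t`). Summing over `x` with `t = T_p f(x)`, the Courtade–Kumar inequality
`∑ₓ h(T_p f(x)) ≥ 2ⁿ h(p)` yields the symmetrized Li–Médard bound, since `T_p f₀` only takes the
values `p` and `1 - p`.

Conversely, both sides of the Li–Médard inequality equal `2ⁿ` at `α = 1`, and their derivatives in
`α` there are `-∑ₓ h(T_p f(x))` and `-2ⁿ h(p)`; the inequality for `α ↓ 1` is therefore the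
Courtade–Kumar inequality.
-/
section NoiseOperator

variable {n : ℕ}

lemma pow_hammingDist_mul_eq_prod (p : ℝ) (x y : Fin n → Bool) :
    p ^ hammingDist x y * (1 - p) ^ (n - hammingDist x y) =
      ∏ j, if x j = y j then 1 - p else p := by
  classical
  have hsplit := card_filter_add_card_filter_not (s := univ) (p := fun j : Fin n => x j = y j)
  have hdist : #{j | ¬x j = y j} = hammingDist x y := rfl
  have hagree : #{j | x j = y j} = n - hammingDist x y := by
    rw [card_univ, Fintype.card_fin, hdist] at hsplit
    omega
  rw [prod_ite, prod_const, prod_const, hdist, hagree, mul_comm]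

lemma sum_ite_eq_one_sub (p : ℝ) (a : Bool) : ∑ b : Bool, (if a = b then 1 - p else p) = 1 := by
  cases a <;> simp

lemma sum_pow_hammingDist_mul (p : ℝ) (x : Fin n → Bool) :
    ∑ y : Fin n → Bool, p ^ hammingDist x y * (1 - p) ^ (n - hammingDist x y) = 1 := by
  simp only [pow_hammingDist_mul_eq_prod,
    ← Fintype.prod_sum (fun j b => if x j = b then 1 - p else p), sum_ite_eq_one_sub,
    prod_const_one]

lemma Tp_mem_Icc {p : ℝ} (hp : p ∈ Set.Icc 0 1) (f : (Fin n → Bool) → Bool) (x : Fin n → Bool) :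
    Tp n p f x ∈ Set.Icc 0 1 := by
  have hw : ∀ y, 0 ≤ p ^ hammingDist x y * (1 - p) ^ (n - hammingDist x y) := fun y =>
    mul_nonneg (pow_nonneg hp.1 _) (pow_nonneg (sub_nonneg.2 hp.2) _)
  refine ⟨sum_nonneg fun y _ => mul_nonneg (hw y) (by split_ifs <;> norm_num), ?_⟩
  calc Tp n p f x ≤ ∑ y : Fin n → Bool, p ^ hammingDist x y * (1 - p) ^ (n - hammingDist x y) :=
        sum_le_sum fun y _ => mul_le_of_le_one_right (hw y) (by split_ifs <;> norm_num)
    _ = 1 := sum_pow_hammingDist_mul p x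

lemma Tp_dict (p : ℝ) (i : Fin n) (x : Fin n → Bool) :
    Tp n p (dict n i) x = if x i then 1 - p else p := by
  set w : Fin n → Bool → ℝ := fun j b =>
    (if x j = b then 1 - p else p) * if j = i then (if b then 1 else 0) else 1
  have hterm : ∀ y : Fin n → Bool,
      p ^ hammingDist x y * (1 - p) ^ (n - hammingDist x y) * (if y i then 1 else 0) =
        ∏ j, w j (y j) := fun y => by
    simp only [w, prod_mul_distrib, pow_hammingDist_mul_eq_prod, prod_ite_eq' univ i, mem_univ,
      ↓reduceIte]
  change ∑ y, p ^ hammingDist x y * (1 - p) ^ (n - hammingDist x y) * (if y i then 1 else 0) = _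
  rw [Fintype.sum_congr _ _ hterm, ← Fintype.prod_sum, prod_eq_single i]
  · cases hx : x i <;> simp [w, hx]
  · intro j _ hj
    simp only [w, hj, if_false, mul_one, sum_ite_eq_one_sub]
  · simp

end NoiseOperator

lemma Nsym_one (n : ℕ) (p : ℝ) (f : (Fin n → Bool) → Bool) : Nsym n p f 1 = 2 ^ n := by
  simp [Nsym]

lemma Nsym_dict (n : ℕ) (p : ℝ) (i : Fin n) (α : ℝ) :
    Nsym n p (dict n i) α = 2 ^ n * (p ^ α + (1 - p) ^ α) := by
  have hconst : ∀ x : Fin n → Bool,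
      Tp n p (dict n i) x ^ α + (1 - Tp n p (dict n i) x) ^ α = p ^ α + (1 - p) ^ α := by
    intro x
    cases hx : x i <;> simp [Tp_dict, hx, add_comm]
  simp [Nsym, hconst, mul_add]

lemma binEnt_eq_binEntropy_div (t : ℝ) : binEnt t = binEntropy t / log 2 := by
  simp only [binEnt, binEntropy, logb, log_inv]
  ring

lemma MI_le_iff (n : ℕ) (p : ℝ) (f : (Fin n → Bool) → Bool) :
    MI n p f ≤ 1 - binEnt p ↔ 2 ^ n * binEntropy p ≤ ∑ x, binEntropy (Tp n p f x) := by
  have hlog : 0 < log 2 := log_pos one_lt_two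
  rw [MI, sub_le_sub_iff_left, le_inv_mul_iff₀ (by positivity)]
  simp only [binEnt_eq_binEntropy_div, ← sum_div, mul_div_assoc', div_le_div_iff_of_pos_right hlog]

lemma hasDerivAt_const_rpow_at_one {t : ℝ} (ht : 0 ≤ t) :
    HasDerivAt (fun α : ℝ => t ^ α) (t * log t) 1 := by
  rcases ht.eq_or_lt with rfl | ht
  · have hzero : (fun α : ℝ => (0 : ℝ) ^ α) =ᶠ[𝓝 1] fun _ => 0 := by
      filter_upwards [eventually_ne_nhds one_ne_zero] with α hα
      exact zero_rpow hα
    simpa using (hasDerivAt_const (1 : ℝ) (0 : ℝ)).congr_of_eventuallyEq hzero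
  · simpa using (hasStrictDerivAt_const_rpow ht 1).hasDerivAt

lemma hasDerivAt_rpow_add_one_sub_rpow_at_one {t : ℝ} (ht : t ∈ Set.Icc 0 1) :
    HasDerivAt (fun α : ℝ => t ^ α + (1 - t) ^ α) (-binEntropy t) 1 := by
  refine ((hasDerivAt_const_rpow_at_one ht.1).add
    (hasDerivAt_const_rpow_at_one (sub_nonneg.2 ht.2))).congr_deriv ?_
  simp only [binEntropy_eq_negMulLog_add_negMulLog_one_sub, negMulLog]
  ring

lemma hasDerivAt_Nsym_at_one {n : ℕ} {p : ℝ} (hp : p ∈ Set.Icc 0 1) (f : (Fin n → Bool) → Bool) :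
    HasDerivAt (Nsym n p f) (-∑ x, binEntropy (Tp n p f x)) 1 := by
  rw [← sum_neg_distrib]
  exact HasDerivAt.fun_sum fun x _ => hasDerivAt_rpow_add_one_sub_rpow_at_one (Tp_mem_Icc hp f x)

lemma hasDerivAt_Nsym_dict_at_one (n : ℕ) {p : ℝ} (hp : p ∈ Set.Icc 0 1) (i : Fin n) :
    HasDerivAt (Nsym n p (dict n i)) (-(2 ^ n * binEntropy p)) 1 := by
  rw [funext (Nsym_dict n p i), neg_mul_eq_mul_neg]
  exact (hasDerivAt_rpow_add_one_sub_rpow_at_one hp).const_mul _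

lemma IsBalanced.pos {n : ℕ} {f : (Fin n → Bool) → Bool} (hf : IsBalanced n f) : 0 < n := by
  rcases Nat.eq_zero_or_pos n with rfl | hn
  · rw [IsBalanced, Fintype.sum_unique] at hf
    split_ifs at hf <;> norm_num at hf
  · exact hn

lemma HasDerivAt.nonpos_of_le_right {D : ℝ → ℝ} {D' a b : ℝ} (hD : HasDerivAt D D' a)
    (hab : a < b) (hle : ∀ x ∈ Set.Ioc a b, D x ≤ D a) : D' ≤ 0 := by
  have hslope : Tendsto (slope D a) (𝓝[>] a) (𝓝 D') :=
    (hasDerivAt_iff_tendsto_slope.mp hD).mono_left (nhdsWithin_mono a fun x hx => ne_of_gt hx)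
  refine le_of_tendsto hslope ?_
  filter_upwards [Ioc_mem_nhdsGT hab] with x hx
  rw [slope_def_field]
  exact div_nonpos_of_nonpos_of_nonneg (sub_nonpos.2 (hle x hx)) (sub_nonneg.2 hx.1.le)

section Tangent

variable {a : ℝ}

lemma mul_mul_cosh_le_sinh_mul_cosh {θ : ℝ} (ha₀ : 0 ≤ a) (ha₁ : a ≤ 1) (hθ : 0 ≤ θ) :
    a * θ * cosh ((1 - a) * θ) ≤ sinh (a * θ) * cosh θ := by
  have hcosh : cosh ((1 - a) * θ) ≤ cosh θ := by
    rw [cosh_le_cosh, abs_of_nonneg (by nlinarith), abs_of_nonneg hθ]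
    nlinarith
  have hsinh : a * θ ≤ sinh (a * θ) := self_le_sinh_iff.2 (by positivity)
  exact mul_le_mul hsinh hcosh (cosh_pos _).le ((by positivity : 0 ≤ a * θ).trans hsinh)

-- For `q = exp (2θ)` this is `mul_mul_cosh_le_sinh_mul_cosh` multiplied by `4 exp (aθ) exp θ`.
lemma mul_add_rpow_mul_log_le {q : ℝ} (ha₀ : 0 ≤ a) (ha₁ : a ≤ 1) (hq : 1 ≤ q) :
    a * (q + q ^ a) * log q ≤ (q ^ a - 1) * (1 + q) := by
  obtain ⟨θ, hθ, rfl⟩ : ∃ θ, 0 ≤ θ ∧ q = exp (2 * θ) :=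
    ⟨log q / 2, by linarith [log_nonneg hq], by rw [mul_div_cancel₀ _ two_ne_zero,
      exp_log (by linarith)]⟩
  have key := mul_mul_cosh_le_sinh_mul_cosh ha₀ ha₁ hθ
  have hE : 0 < exp θ := exp_pos θ
  have hA : 0 < exp (a * θ) := exp_pos (a * θ)
  have e1 : exp (2 * θ) = exp θ ^ 2 := by rw [← exp_nat_mul]; norm_num
  have e2 : exp (2 * θ) ^ a = exp (a * θ) ^ 2 := by rw [← exp_mul, ← exp_nat_mul]; ring_nf
  have e3 : exp ((1 - a) * θ) = exp θ / exp (a * θ) := by rw [← exp_sub]; ring_nf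
  have e4 : exp (-((1 - a) * θ)) = exp (a * θ) / exp θ := by rw [← exp_sub]; ring_nf
  rw [cosh_eq, cosh_eq, sinh_eq, e3, e4, exp_neg, exp_neg] at key
  rw [log_exp, e2, e1]
  refine le_of_eq_of_le ?_ ((mul_le_mul_of_nonneg_right key
    (by positivity : 0 ≤ 4 * exp (a * θ) * exp θ)).trans_eq ?_) <;> field_simp <;> ring

lemma mul_rpow_add_mul_rpow_mul_log_le {t : ℝ} (ha₀ : 0 ≤ a) (ha₁ : a ≤ 1) (ht₀ : 0 < t)
    (ht : t ≤ 1 / 2) :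
    a * ((1 - t) * t ^ a + t * (1 - t) ^ a) * (log (1 - t) - log t) ≤ (1 - t) ^ a - t ^ a := by
  have h1t : 0 < 1 - t := by linarith
  have h := mul_add_rpow_mul_log_le ha₀ ha₁ ((one_le_div ht₀).2 (by linarith : t ≤ 1 - t))
  rw [div_rpow h1t.le ht₀.le, log_div h1t.ne' ht₀.ne'] at h
  have hta : 0 < t ^ a := rpow_pos_of_pos ht₀ a
  refine le_of_eq_of_le ?_ ((mul_le_mul_of_nonneg_right h
    (by positivity : 0 ≤ t * t ^ a)).trans_eq ?_)
  · field_simp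
  · field_simp
    ring

lemma hasDerivAt_rpow_sub_rpow_one_sub {t : ℝ} (ht₀ : 0 < t) (ht₁ : t < 1) :
    HasDerivAt (fun s => s ^ a - (1 - s) ^ a) (a * t ^ (a - 1) + a * (1 - t) ^ (a - 1)) t := by
  have hsub := (hasDerivAt_rpow_const (p := a) (Or.inl (sub_pos.2 ht₁).ne')).comp t
    ((hasDerivAt_id t).const_sub 1)
  refine ((hasDerivAt_rpow_const (Or.inl ht₀.ne')).sub hsub).congr_deriv ?_
  ring

lemma hasDerivAt_rpow_add_rpow_one_sub {t : ℝ} (ht₀ : 0 < t) (ht₁ : t < 1) :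
    HasDerivAt (fun s => s ^ a + (1 - s) ^ a) (a * t ^ (a - 1) - a * (1 - t) ^ (a - 1)) t := by
  have hsub := (hasDerivAt_rpow_const (p := a) (Or.inl (sub_pos.2 ht₁).ne')).comp t
    ((hasDerivAt_id t).const_sub 1)
  refine ((hasDerivAt_rpow_const (Or.inl ht₀.ne')).add hsub).congr_deriv ?_
  ring

lemma hasDerivAt_log_one_sub_sub_log {t : ℝ} (ht₀ : 0 < t) (ht₁ : t < 1) :
    HasDerivAt (fun s => log (1 - s) - log s) (-(t * (1 - t))⁻¹) t := by
  have hsub := (hasDerivAt_log (sub_pos.2 ht₁).ne').comp t ((hasDerivAt_id t).const_sub 1)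
  refine (hsub.sub (hasDerivAt_log ht₀.ne')).congr_deriv ?_
  field_simp [(sub_pos.2 ht₁).ne']
  ring

lemma log_one_sub_sub_log_pos {t : ℝ} (ht₀ : 0 < t) (ht : t < 1 / 2) : 0 < log (1 - t) - log t :=
  sub_pos.2 (log_lt_log ht₀ (by linarith))

lemma antitoneOn_rpow_sub_rpow_div_log (ha₀ : 0 ≤ a) (ha₁ : a ≤ 1) :
    AntitoneOn (fun t => (t ^ a - (1 - t) ^ a) / (log (1 - t) - log t)) (Set.Ioo 0 (1 / 2)) := by
  have hderiv : ∀ t ∈ Set.Ioo (0 : ℝ) (1 / 2), HasDerivAt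
      (fun t => (t ^ a - (1 - t) ^ a) / (log (1 - t) - log t))
      (((a * t ^ (a - 1) + a * (1 - t) ^ (a - 1)) * (log (1 - t) - log t) -
        (t ^ a - (1 - t) ^ a) * -(t * (1 - t))⁻¹) / (log (1 - t) - log t) ^ 2) t :=
    fun t ht => (hasDerivAt_rpow_sub_rpow_one_sub ht.1 (by linarith [ht.2])).div
      (hasDerivAt_log_one_sub_sub_log ht.1 (by linarith [ht.2]))
      (log_one_sub_sub_log_pos ht.1 ht.2).ne'
  refine antitoneOn_of_hasDerivWithinAt_nonpos (convex_Ioo 0 (1 / 2))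
    (fun t ht => (hderiv t ht).continuousAt.continuousWithinAt)
    (fun t ht => (hderiv t (interior_subset ht)).hasDerivWithinAt) ?_
  rw [interior_Ioo]
  rintro t ⟨ht₀, ht⟩
  have h1t : 0 < 1 - t := by linarith
  have key := mul_rpow_add_mul_rpow_mul_log_le ha₀ ha₁ ht₀ ht.le
  have hnum : (a * t ^ (a - 1) + a * (1 - t) ^ (a - 1)) * (log (1 - t) - log t) -
      (t ^ a - (1 - t) ^ a) * -(t * (1 - t))⁻¹ =
      (a * ((1 - t) * t ^ a + t * (1 - t) ^ a) * (log (1 - t) - log t) -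
        ((1 - t) ^ a - t ^ a)) / (t * (1 - t)) := by
    rw [rpow_sub_one ht₀.ne', rpow_sub_one h1t.ne']
    field_simp
    ring
  rw [hnum]
  exact div_nonpos_of_nonpos_of_nonneg
    (div_nonpos_of_nonpos_of_nonneg (by linarith) (by positivity)) (sq_nonneg _)


end Tangent

lemma rpow_add_rpow_le_tangent {α p t : ℝ} (hα₁ : 1 ≤ α) (hα₂ : α ≤ 2) (hp₀ : 0 < p)
    (hp : p < 1 / 2) (ht : t ∈ Set.Icc 0 (1 / 2)) :
    t ^ α + (1 - t) ^ α ≤ p ^ α + (1 - p) ^ α +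
      α * ((p ^ (α - 1) - (1 - p) ^ (α - 1)) / (log (1 - p) - log p)) *
        (binEntropy t - binEntropy p) := by
  set R := fun t : ℝ => (t ^ (α - 1) - (1 - t) ^ (α - 1)) / (log (1 - t) - log t)
  have hR : AntitoneOn R (Set.Ioo 0 (1 / 2)) :=
    antitoneOn_rpow_sub_rpow_div_log (by linarith) (by linarith)
  set g := fun t => p ^ α + (1 - p) ^ α + α * R p * (binEntropy t - binEntropy p) -
    (t ^ α + (1 - t) ^ α)
  have hg_cont : Continuous g := by
    have := continuous_rpow_const (q := α) (by linarith)
    fun_prop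
  have hg_deriv : ∀ t ∈ Set.Ioo (0 : ℝ) (1 / 2),
      HasDerivAt g (α * (R p - R t) * (log (1 - t) - log t)) t := by
    intro t ht
    have ht₁ : t < 1 := by linarith [ht.2]
    have hL := log_one_sub_sub_log_pos ht.1 ht.2
    refine ((((hasDerivAt_binEntropy ht.1.ne' ht₁.ne).sub_const _).const_mul _).const_add _).sub
      (hasDerivAt_rpow_add_rpow_one_sub ht.1 ht₁) |>.congr_deriv ?_
    simp only [R]
    field_simp
  have hp_mem : p ∈ Set.Ioo (0 : ℝ) (1 / 2) := ⟨hp₀, hp⟩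
  have hsub₀ : Set.Ioo 0 p ⊆ Set.Ioo 0 (1 / 2) := Set.Ioo_subset_Ioo_right hp.le
  have hsub₁ : Set.Ioo p (1 / 2) ⊆ Set.Ioo 0 (1 / 2) := Set.Ioo_subset_Ioo_left hp₀.le
  have hg_min : IsMinOn g (Set.Icc 0 (1 / 2)) p := by
    refine isMinOn_Icc_of_deriv hg_cont.continuousAt hg_cont.continuousAt hg_cont.continuousAt
      (fun t ht => (hg_deriv t (hsub₀ ht)).differentiableAt.differentiableWithinAt)
      (fun t ht => (hg_deriv t (hsub₁ ht)).differentiableAt.differentiableWithinAt)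
      (fun t ht => ?_) (fun t ht => ?_)
    · rw [(hg_deriv t (hsub₀ ht)).deriv]
      have hRt : R p ≤ R t := hR (hsub₀ ht) hp_mem ht.2.le
      exact mul_nonpos_of_nonpos_of_nonneg (mul_nonpos_of_nonneg_of_nonpos (by linarith)
        (by linarith)) (log_one_sub_sub_log_pos ht.1 (hsub₀ ht).2).le
    · rw [(hg_deriv t (hsub₁ ht)).deriv]
      have hRt : R t ≤ R p := hR hp_mem (hsub₁ ht) ht.1.le
      exact mul_nonneg (mul_nonneg (by linarith) (by linarith))
        (log_one_sub_sub_log_pos (hsub₁ ht).1 ht.2).le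
  have hgt : g p ≤ g t := hg_min ht
  simp only [g, sub_self, mul_zero, add_zero] at hgt
  linarith

lemma exists_rpow_add_rpow_le_add_mul_binEntropy_sub {α p : ℝ} (hα₁ : 1 ≤ α) (hα₂ : α ≤ 2)
    (hp₀ : 0 < p) (hp : p < 1 / 2) :
    ∃ c ≤ 0, ∀ t ∈ Set.Icc (0 : ℝ) 1,
      t ^ α + (1 - t) ^ α ≤ p ^ α + (1 - p) ^ α + c * (binEntropy t - binEntropy p) := by
  refine ⟨α * ((p ^ (α - 1) - (1 - p) ^ (α - 1)) / (log (1 - p) - log p)), ?_, fun t ht => ?_⟩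
  · have hnum : p ^ (α - 1) ≤ (1 - p) ^ (α - 1) :=
      rpow_le_rpow hp₀.le (by linarith) (by linarith)
    exact mul_nonpos_of_nonneg_of_nonpos (by linarith)
      (div_nonpos_of_nonpos_of_nonneg (by linarith) (log_one_sub_sub_log_pos hp₀ hp).le)
  · rcases le_total t (1 / 2) with h | h
    · exact rpow_add_rpow_le_tangent hα₁ hα₂ hp₀ hp ⟨ht.1, h⟩
    · have h' := rpow_add_rpow_le_tangent hα₁ hα₂ hp₀ hp (t := 1 - t)
        ⟨by linarith [ht.2], by linarith⟩
      rwa [sub_sub_cancel, binEntropy_one_sub, add_comm] at h'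

/-- The Courtade–Kumar conjecture for balanced functions is equivalent to the symmetrized
Li–Médard conjecture. -/
theorem CK_iff_sym_li_medard (n : ℕ) (p : ℝ) (hp : 0 < p) (hp2 : p < 1/2) :
    (∀ f : (Fin n → Bool) → Bool, IsBalanced n f → MI n p f ≤ 1 - binEnt p) ↔
    (∀ f : (Fin n → Bool) → Bool, IsBalanced n f → ∀ i : Fin n,
      ∀ α ∈ Set.Icc (1 : ℝ) 2, Nsym n p f α ≤ Nsym n p (dict n i) α) := by
  have hp_mem : p ∈ Set.Icc (0 : ℝ) 1 := ⟨hp.le, by linarith⟩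
  simp only [MI_le_iff]
  constructor
  · intro hCK f hf i α ⟨hα₁, hα₂⟩
    obtain ⟨c, hc, htangent⟩ := exists_rpow_add_rpow_le_add_mul_binEntropy_sub hα₁ hα₂ hp hp2
    calc Nsym n p f α
        ≤ ∑ x, (p ^ α + (1 - p) ^ α + c * (binEntropy (Tp n p f x) - binEntropy p)) :=
          sum_le_sum fun x _ => htangent _ (Tp_mem_Icc hp_mem f x)
      _ = Nsym n p (dict n i) α + c * (∑ x, binEntropy (Tp n p f x) - 2 ^ n * binEntropy p) := by
          simp only [Nsym_dict, sum_add_distrib, sum_const, card_univ, Fintype.card_pi,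
            Fintype.card_bool, prod_const, Fintype.card_fin, nsmul_eq_mul, Nat.cast_pow,
            Nat.cast_ofNat, ← mul_sum, sum_sub_distrib]
          ring
      _ ≤ Nsym n p (dict n i) α :=
          add_le_of_nonpos_right (mul_nonpos_of_nonpos_of_nonneg hc (sub_nonneg.2 (hCK f hf)))
  · intro hLM f hf
    have i : Fin n := ⟨0, hf.pos⟩
    have hD := (hasDerivAt_Nsym_at_one hp_mem f).sub (hasDerivAt_Nsym_dict_at_one n hp_mem i)
    have hD_nonpos := hD.nonpos_of_le_right one_lt_two fun α hα => by
      rw [Pi.sub_apply, Pi.sub_apply, Nsym_one, Nsym_one, sub_self, sub_nonpos]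
      exact hLM f hf i α ⟨hα.1.le, hα.2⟩
    linarith
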